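/- arXiv:0907.0259 — 5 statements merged into one kernel-verified Lean document; each statement's English description precedes it below -/
import Mathlib

section
/- Let (X,d) be a compact metric space, K : X × X → ℝ a continuous function, μ a Borel probability measure on X, and T : X → X a measure-preserving transformation that is ergodic with respect to μ (T need not be continuous). Then for μ-almost every x ∈ X, (1/n²) ∑_{i=1}^{n} ∑_{j=1}^{n} K(T^i x, T^j x) converges as n → ∞ to ∬_{X×X} K(y,z) dμ(y) dμ(z). -/
/-!
Fix `x` and put `Φₙ y = (1/n) ∑_{j<n} K (y, T^j x)`; the double average is the Birkhoff average
of `Φₙ` along the orbit of `x`. By the pointwise ergodic theorem, for a.e. `x` we have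
`Φₙ (u k) → g (u k) = ∫ K (u k, z) dμ` along a dense sequence `u`, and the Birkhoff averages of
`g` tend to `∬ K`. Uniform continuity of `K` makes `(Φₙ)` equicontinuous, so `Φₙ → g` uniformly
and the double average differs from the average of `g` by at most `sup |Φₙ - g| → 0`.
The sums over `1, …, n` are Birkhoff sums based at `T x`, and `T` preserves full-measure sets.
-/

open MeasureTheory Filter Topology Finset

section PointwiseErgodic

variable {α : Type*} {T : α → α} {g : α → ℝ}

noncomputable def maxBirkhoffSum (T : α → α) (g : α → ℝ) (n : ℕ) (x : α) : ℝ :=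
  (range (n + 1)).sup' nonempty_range_add_one fun k => birkhoffSum T g k x

lemma birkhoffSum_le_maxBirkhoffSum {k n : ℕ} (hk : k ≤ n) (x : α) :
    birkhoffSum T g k x ≤ maxBirkhoffSum T g n x :=
  le_sup' (fun k => birkhoffSum T g k x) (mem_range.2 (Nat.lt_succ_of_le hk))

lemma maxBirkhoffSum_nonneg (n : ℕ) (x : α) : 0 ≤ maxBirkhoffSum T g n x := by
  simpa using birkhoffSum_le_maxBirkhoffSum (T := T) (g := g) n.zero_le x

lemma maxBirkhoffSum_mono (x : α) : Monotone (maxBirkhoffSum T g · x) := fun _ _ hmn =>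
  sup'_le _ _ fun k hk => birkhoffSum_le_maxBirkhoffSum (by grind) x

lemma maxBirkhoffSum_le_birkhoffSum_abs (n : ℕ) (x : α) :
    maxBirkhoffSum T g n x ≤ birkhoffSum T (fun y => |g y|) n x :=
  sup'_le _ _ fun k hk => calc
    birkhoffSum T g k x ≤ birkhoffSum T (fun y => |g y|) k x :=
      sum_le_sum fun _ _ => le_abs_self _
    _ ≤ birkhoffSum T (fun y => |g y|) n x :=
      sum_le_sum_of_subset_of_nonneg (range_mono (by grind))
        fun _ _ _ => abs_nonneg _

lemma maxBirkhoffSum_le_max_zero_add (n : ℕ) (x : α) :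
    maxBirkhoffSum T g n x ≤ max 0 (g x + maxBirkhoffSum T g n (T x)) := by
  refine sup'_le _ _ fun k hk => ?_
  cases k with
  | zero => simp
  | succ k =>
    rw [birkhoffSum_succ']
    have hk : k ≤ n := by grind
    exact le_max_of_le_right (add_le_add_right (birkhoffSum_le_maxBirkhoffSum hk (T x)) _)

lemma bddAbove_range_birkhoffSum_apply_iff (x : α) :
    BddAbove (Set.range fun n => birkhoffSum T g n (T x)) ↔
      BddAbove (Set.range fun n => birkhoffSum T g n x) := by
  simp only [bddAbove_def, Set.forall_mem_range]
  constructor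
  · rintro ⟨M, hM⟩
    refine ⟨max 0 (g x + M), fun n => ?_⟩
    cases n with
    | zero => simp
    | succ n => exact le_max_of_le_right (birkhoffSum_succ' T g n x ▸ add_le_add_right (hM n) _)
  · rintro ⟨M, hM⟩
    refine ⟨M - g x, fun n => ?_⟩
    have := hM (n + 1)
    rw [birkhoffSum_succ'] at this
    linarith

variable [MeasurableSpace α] {μ : Measure α}

lemma measurable_birkhoffSum (hT : Measurable T) (hg : Measurable g) (n : ℕ) :
    Measurable (birkhoffSum T g n) :=
  Finset.measurable_sum _ fun k _ => hg.comp (hT.iterate k)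

lemma measurable_maxBirkhoffSum (hT : Measurable T) (hg : Measurable g) (n : ℕ) :
    Measurable (maxBirkhoffSum T g n) :=
  Finset.measurable_range_sup'' fun k _ => measurable_birkhoffSum hT hg k

lemma integrable_birkhoffSum (hT : MeasurePreserving T μ μ) (hg : Integrable g μ) (n : ℕ) :
    Integrable (birkhoffSum T g n) μ :=
  integrable_finsetSum _ fun k _ => (hT.iterate k).integrable_comp_of_integrable hg

lemma integrable_maxBirkhoffSum (hT : MeasurePreserving T μ μ) (hgm : Measurable g)
    (hg : Integrable g μ) (n : ℕ) : Integrable (maxBirkhoffSum T g n) μ :=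
  (integrable_birkhoffSum hT hg.abs n).mono'
    (measurable_maxBirkhoffSum hT.measurable hgm n).aestronglyMeasurable (ae_of_all _ fun x => by
      rw [Real.norm_of_nonneg (maxBirkhoffSum_nonneg n x)]
      exact maxBirkhoffSum_le_birkhoffSum_abs n x)

/-- The maximal ergodic theorem, by Garsia's argument. -/
theorem setIntegral_maxBirkhoffSum_pos_nonneg (hT : MeasurePreserving T μ μ) (hgm : Measurable g)
    (hg : Integrable g μ) (n : ℕ) :
    0 ≤ ∫ x in {x | 0 < maxBirkhoffSum T g n x}, g x ∂μ := by
  set M := maxBirkhoffSum T g n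
  set E := {x | 0 < M x}
  have hMm : Measurable M := measurable_maxBirkhoffSum hT.measurable hgm n
  have hM : Integrable M μ := integrable_maxBirkhoffSum hT hgm hg n
  have hMT : Integrable (fun x => M (T x)) μ := hT.integrable_comp_of_integrable hM
  have hE : MeasurableSet E := measurableSet_lt measurable_const hMm
  have hME : ∫ x in E, M x ∂μ = ∫ x, M x ∂μ :=
    setIntegral_eq_integral_of_forall_compl_eq_zero fun x hx =>
      le_antisymm (not_lt.1 hx) (maxBirkhoffSum_nonneg n x)
  have hMTE : ∫ x in E, M (T x) ∂μ ≤ ∫ x, M x ∂μ := by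
    have hint : ∫ x, M (T x) ∂μ = ∫ x, M x ∂μ := by
      conv_rhs => rw [← hT.map_eq, integral_map hT.aemeasurable hMm.aestronglyMeasurable]
    rw [← hint]
    exact setIntegral_le_integral hMT (ae_of_all _ fun x => maxBirkhoffSum_nonneg n (T x))
  have hle : ∫ x in E, M x ∂μ ≤ ∫ x in E, (g x + M (T x)) ∂μ :=
    setIntegral_mono_on hM.integrableOn (hg.add hMT).integrableOn hE fun x hx =>
      (le_max_iff.1 (maxBirkhoffSum_le_max_zero_add n x)).resolve_left hx.not_ge
  rw [integral_add hg.integrableOn hMT.integrableOn] at hle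
  linarith

theorem integral_nonneg_of_ae_exists_birkhoffSum_pos (hT : MeasurePreserving T μ μ)
    (hgm : Measurable g) (hg : Integrable g μ) (hpos : ∀ᵐ x ∂μ, ∃ n, 0 < birkhoffSum T g n x) :
    0 ≤ ∫ x, g x ∂μ := by
  set E : ℕ → Set α := fun n => {x | 0 < maxBirkhoffSum T g n x}
  have hE : ∀ n, MeasurableSet (E n) := fun n =>
    measurableSet_lt measurable_const (measurable_maxBirkhoffSum hT.measurable hgm n)
  have hEmono : Monotone E := fun _ _ hmn _ hx => hx.trans_le (maxBirkhoffSum_mono _ hmn)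
  have hfull : μ.restrict (⋃ n, E n) = μ := Measure.restrict_eq_self_of_ae_mem <|
    hpos.mono fun x ⟨n, hn⟩ =>
      Set.mem_iUnion.2 ⟨n, hn.trans_le (birkhoffSum_le_maxBirkhoffSum le_rfl x)⟩
  have hlim := tendsto_setIntegral_of_monotone hE hEmono hg.integrableOn
  rw [hfull] at hlim
  exact ge_of_tendsto' hlim fun n => setIntegral_maxBirkhoffSum_pos_nonneg hT hgm hg n

/-- For ergodic `T`, the set where the Birkhoff sums are bounded above is invariant, hence null
or conull; the maximal ergodic theorem excludes the first case when `∫ g < 0`. -/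
theorem ae_bddAbove_birkhoffSum_of_integral_neg (hT : Ergodic T μ) (hgm : Measurable g)
    (hg : Integrable g μ) (hneg : ∫ x, g x ∂μ < 0) :
    ∀ᵐ x ∂μ, BddAbove (Set.range fun n => birkhoffSum T g n x) := by
  set L := {x | BddAbove (Set.range fun n => birkhoffSum T g n x)}
  have hL : MeasurableSet L :=
    measurableSet_bddAbove_range (measurable_birkhoffSum hT.measurable hgm)
  have hinv : T ⁻¹' L = L := Set.ext bddAbove_range_birkhoffSum_apply_iff
  rcases hT.ae_empty_or_univ hL hinv with hnull | hconull
  · refine absurd (integral_nonneg_of_ae_exists_birkhoffSum_pos hT.toMeasurePreserving hgm hg ?_)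
      hneg.not_ge
    filter_upwards [measure_eq_zero_iff_ae_notMem.1 (ae_eq_empty.1 hnull)] with x hx
    by_contra! hnonpos
    exact hx ⟨0, Set.forall_mem_range.2 hnonpos⟩
  · exact ae_eq_univ.1 hconull

theorem ae_eventually_birkhoffAverage_lt [IsProbabilityMeasure μ] (hT : Ergodic T μ)
    (hgm : Measurable g) (hg : Integrable g μ) {c : ℝ} (hc : ∫ x, g x ∂μ < c) :
    ∀ᵐ x ∂μ, ∀ᶠ n in atTop, birkhoffAverage ℝ T g n x < c := by
  obtain ⟨c', hgc', hc'c⟩ := exists_between hc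
  have hneg : ∫ x, (g x - c') ∂μ < 0 := by
    rw [integral_sub hg (integrable_const c')]
    simpa using hgc'
  filter_upwards [ae_bddAbove_birkhoffSum_of_integral_neg hT (hgm.sub_const c')
    (hg.sub (integrable_const c')) hneg] with x ⟨M, hM⟩
  have hlim : Tendsto (fun n : ℕ => c' + M / n) atTop (𝓝 (c' + 0)) :=
    tendsto_const_nhds.add (tendsto_const_div_atTop_nhds_zero_nat M)
  filter_upwards [hlim.eventually (gt_mem_nhds (show c' + 0 < c by linarith)),
    eventually_ne_atTop 0] with n hn hn0
  have hsum : birkhoffSum T (fun x => g x - c') n x = birkhoffSum T g n x - n * c' := by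
    simp [birkhoffSum, sum_sub_distrib]
  have hSM := hM (Set.mem_range_self n)
  rw [hsum] at hSM
  refine lt_of_le_of_lt ?_ hn
  rw [birkhoffAverage, smul_eq_mul, inv_mul_le_iff₀ (by positivity)]
  field_simp
  linarith

theorem ae_forall_eventually_birkhoffAverage_lt [IsProbabilityMeasure μ] (hT : Ergodic T μ)
    (hgm : Measurable g) (hg : Integrable g μ) :
    ∀ᵐ x ∂μ, ∀ c, ∫ x, g x ∂μ < c → ∀ᶠ n in atTop, birkhoffAverage ℝ T g n x < c := by
  have hrat : ∀ᵐ x ∂μ, ∀ q : ℚ, ∫ x, g x ∂μ < q →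
      ∀ᶠ n in atTop, birkhoffAverage ℝ T g n x < q := by
    refine ae_all_iff.2 fun q => ?_
    by_cases hq : ∫ x, g x ∂μ < q
    · filter_upwards [ae_eventually_birkhoffAverage_lt hT hgm hg hq] with x hx _ using hx
    · exact ae_of_all _ fun x h => absurd h hq
  filter_upwards [hrat] with x hx c hc
  obtain ⟨q, hgq, hqc⟩ := exists_rat_btwn hc
  exact (hx q hgq).mono fun n hn => hn.trans hqc

theorem ae_tendsto_birkhoffAverage_integral [IsProbabilityMeasure μ] (hT : Ergodic T μ)
    (hg : Integrable g μ) :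
    ∀ᵐ x ∂μ, Tendsto (birkhoffAverage ℝ T g · x) atTop (𝓝 (∫ x, g x ∂μ)) := by
  set g' := hg.1.mk g
  have hgg' : g =ᵐ[μ] g' := hg.1.ae_eq_mk
  have hg'm : Measurable g' := hg.1.stronglyMeasurable_mk.measurable
  have hg' : Integrable g' μ := hg.congr hgg'
  have hsame : ∀ᵐ x ∂μ, ∀ n, birkhoffAverage ℝ T g n x = birkhoffAverage ℝ T g' n x :=
    ae_all_iff.2 fun n => hT.quasiMeasurePreserving.birkhoffAverage_ae_eq_of_ae_eq ℝ hgg' n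
  rw [integral_congr_ae hgg']
  filter_upwards [hsame, ae_forall_eventually_birkhoffAverage_lt hT hg'm hg',
    ae_forall_eventually_birkhoffAverage_lt hT hg'm.neg hg'.neg] with x hx hup hlow
  simp only [hx]
  refine tendsto_order.2 ⟨fun a ha => ?_, hup⟩
  refine (hlow (-a) (by simpa [integral_neg] using ha)).mono fun n hn => ?_
  simp only [birkhoffAverage_neg, Pi.neg_apply] at hn
  linarith

end PointwiseErgodic

section Averages

variable {α E : Type*} [NormedAddCommGroup E] [NormedSpace ℝ E]

lemma dist_birkhoffAverage_le_of_forall_dist_le (T : α → α) {f f' : α → E} {C : ℝ} (hC : 0 ≤ C)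
    (hf : ∀ y, dist (f y) (f' y) ≤ C) (n : ℕ) (x : α) :
    dist (birkhoffAverage ℝ T f n x) (birkhoffAverage ℝ T f' n x) ≤ C := by
  rcases eq_or_ne n 0 with rfl | hn
  · simpa using hC
  rw [birkhoffAverage, birkhoffAverage, dist_smul₀, norm_inv, Real.norm_natCast,
    inv_mul_le_iff₀ (by positivity)]
  calc dist (birkhoffSum T f n x) (birkhoffSum T f' n x)
      ≤ ∑ k ∈ range n, dist (f (T^[k] x)) (f' (T^[k] x)) := dist_sum_sum_le _ _ _
    _ ≤ ∑ _k ∈ range n, C := sum_le_sum fun k _ => hf _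
    _ = n * C := by simp

lemma tendsto_birkhoffAverage_sub_of_tendstoUniformly {F : ℕ → α → E} {f : α → E}
    (hF : TendstoUniformly F f atTop) (T : α → α) (x : α) :
    Tendsto (fun n => birkhoffAverage ℝ T (F n) n x - birkhoffAverage ℝ T f n x) atTop (𝓝 0) := by
  refine Metric.tendsto_atTop.2 fun ε hε => ?_
  obtain ⟨N, hN⟩ := eventually_atTop.1 (Metric.tendstoUniformly_iff.1 hF (ε / 2) (half_pos hε))
  refine ⟨N, fun n hn => ?_⟩
  rw [dist_zero_right, ← dist_eq_norm]
  exact (dist_birkhoffAverage_le_of_forall_dist_le T (half_pos hε).le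
    (fun y => (dist_comm (f y) _ ▸ hN n hn y).le) n x).trans_lt (half_lt_self hε)

end Averages

lemma uniformEquicontinuous_birkhoffAverage_section {X Y : Type*} [PseudoMetricSpace X]
    [PseudoMetricSpace Y] {K : X × Y → ℝ} (hK : UniformContinuous K) (T : Y → Y) (x : Y) :
    UniformEquicontinuous fun n (y : X) => birkhoffAverage ℝ T (fun z => K (y, z)) n x := by
  refine Metric.uniformEquicontinuous_iff.2 fun ε hε => ?_
  obtain ⟨δ, hδ, hKδ⟩ := Metric.uniformContinuous_iff.1 hK (ε / 2) (half_pos hε)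
  refine ⟨δ, hδ, fun y y' hyy' n => ?_⟩
  exact (dist_birkhoffAverage_le_of_forall_dist_le T (half_pos hε).le
    (fun z => (hKδ (by simpa [Prod.dist_eq] using hyy')).le) n x).trans_lt (half_lt_self hε)

/-- Equicontinuity of the averaged sections upgrades convergence on a dense set to uniform
convergence. -/
theorem tendsto_birkhoffAverage_birkhoffAverage {X : Type*} [PseudoMetricSpace X]
    [CompactSpace X] {K : X × X → ℝ} (hK : Continuous K) {g : X → ℝ} (hg : Continuous g)
    {u : ℕ → X} (hu : DenseRange u) (T : X → X) (x : X)
    (hsec : ∀ k, Tendsto (birkhoffAverage ℝ T (fun z => K (u k, z)) · x) atTop (𝓝 (g (u k))))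
    {c : ℝ} (hgx : Tendsto (birkhoffAverage ℝ T g · x) atTop (𝓝 c)) :
    Tendsto (fun n => birkhoffAverage ℝ T
      (fun y => birkhoffAverage ℝ T (fun z => K (y, z)) n x) n x) atTop (𝓝 c) := by
  set Φ := fun n (y : X) => birkhoffAverage ℝ T (fun z => K (y, z)) n x
  have hΦ : Equicontinuous Φ := (uniformEquicontinuous_birkhoffAverage_section
    (CompactSpace.uniformContinuous_of_continuous hK) T x).equicontinuous
  have hpt : Tendsto Φ atTop (𝓝 g) :=
    tendsto_pi_nhds.2 fun y => hu.induction_on y (hΦ.isClosed_setOfPred_tendsto hg) hsec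
  have hunif : TendstoUniformly Φ g atTop :=
    UniformFun.tendsto_iff_tendstoUniformly.1 ((hΦ.tendsto_uniformFun_iff_pi atTop g).2 hpt)
  simpa using (tendsto_birkhoffAverage_sub_of_tendstoUniformly hunif T x).add hgx

lemma birkhoffSum_apply_eq_sum_Icc {α M : Type*} [AddCommMonoid M] (T : α → α) (f : α → M)
    (n : ℕ) (x : α) : birkhoffSum T f n (T x) = ∑ i ∈ Icc 1 n, f (T^[i] x) := by
  rw [← Ico_add_one_right_eq_Icc, ← zero_add 1, ← sum_Ico_add', birkhoffSum, range_eq_Ico]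
  simp only [Function.iterate_succ_apply]

lemma birkhoffAverage_birkhoffAverage_apply_eq_sum_Icc {α : Type*} (T : α → α) (K : α × α → ℝ)
    (n : ℕ) (x : α) :
    birkhoffAverage ℝ T (fun y => birkhoffAverage ℝ T (fun z => K (y, z)) n (T x)) n (T x) =
      ((n : ℝ) ^ 2)⁻¹ * ∑ i ∈ Icc 1 n, ∑ j ∈ Icc 1 n, K (T^[i] x, T^[j] x) := by
  simp only [birkhoffAverage, birkhoffSum_apply_eq_sum_Icc, smul_eq_mul, mul_sum, sq, mul_inv,
    mul_assoc]

theorem stmt_0 {X : Type*} [MetricSpace X] [CompactSpace X] [MeasurableSpace X] [BorelSpace X]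
    (μ : Measure X) [IsProbabilityMeasure μ] (T : X → X) (hT : Ergodic T μ)
    (K : X × X → ℝ) (hK : Continuous K) :
    ∀ᵐ x ∂μ, Tendsto (fun n : ℕ => ((n : ℝ) ^ 2)⁻¹ *
        ∑ i ∈ Finset.Icc 1 n, ∑ j ∈ Finset.Icc 1 n, K (T^[i] x, T^[j] x))
      atTop (𝓝 (∫ y, ∫ z, K (y, z) ∂μ ∂μ)) := by
  set g : X → ℝ := fun y => ∫ z, K (y, z) ∂μ
  have hg : Continuous g := by
    simpa using continuous_parametric_integral_of_continuous (μ := μ) (f := Function.curry K)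
      (by rwa [Function.uncurry_curry]) isCompact_univ
  have := nonempty_of_isProbabilityMeasure μ
  obtain ⟨u, hu⟩ := TopologicalSpace.exists_dense_seq X
  have hsec : ∀ᵐ x ∂μ, ∀ k,
      Tendsto (birkhoffAverage ℝ T (fun z => K (u k, z)) · x) atTop (𝓝 (g (u k))) :=
    ae_all_iff.2 fun k => ae_tendsto_birkhoffAverage_integral hT <|
      (hK.comp (Continuous.prodMk_right (u k))).integrable_of_hasCompactSupport
        (HasCompactSupport.of_compactSpace _)
  have hgx := ae_tendsto_birkhoffAverage_integral hT <|
    hg.integrable_of_hasCompactSupport (HasCompactSupport.of_compactSpace g)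
  filter_upwards [hT.quasiMeasurePreserving.ae (hsec.and hgx)] with x ⟨hxs, hxg⟩
  simp only [← birkhoffAverage_birkhoffAverage_apply_eq_sum_Icc]
  exact tendsto_birkhoffAverage_birkhoffAverage hK hg hu T (T x) hxs hxg
end

section
/- There exist a compact metric space X, a Borel probability measure μ, a mixing measure-preserving transformation T : X → X, and a bounded Borel-measurable symmetric function K : X × X → ℝ with K = 0 (μ × μ)-almost everywhere, such that K(T^i x, T^j x) = 1 for all x ∈ X and all i, j ≥ 1; in particular the double ergodic averages (1/n²) ∑_{i,j ≤ n} K(T^i x, T^j x) do not converge to ∬ K d(μ × μ) = 0 for any x. -/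
open MeasureTheory Filter Topology
open scoped ENNReal NNReal InnerProductSpace

/-!
The doubling map `x ↦ 2x` on the circle is mixing for Haar measure: its Koopman operator sends
the character `e_m` to `e_{2m}`, so for `m ≠ 0` the correlation `⟪f, e_{2ⁿm}⟫` is a Fourier
coefficient of `f` along an injective sequence of frequencies and tends to `0` by Bessel's
inequality. The correlations are uniformly Lipschitz in the second argument, so convergence on
the characters extends to all of `L²`, in particular to indicator functions.

For `K` take the indicator of the grand orbit relation `{(u, v) | ∃ a b, Tᵃ u = Tᵇ v}`. It
contains every pair `(Tⁱ x, Tʲ x)`, yet it is a countable union of sets whose slices are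
preimages of points under some `Tᵇ`, which are null because `T` preserves a measure without atoms.
-/

theorem tendsto_of_tendsto_on_denseSpan {𝕜 E F ι α : Type*} [NontriviallyNormedField 𝕜]
    [NormedAddCommGroup E] [NormedSpace 𝕜 E] [NormedAddCommGroup F] [NormedSpace 𝕜 F]
    {l : Filter α} {L : α → E →ₗ[𝕜] F} {C : ℝ≥0} (hL : ∀ a, LipschitzWith C (L a))
    {L' : E →L[𝕜] F} {v : ι → E} (hv : (Submodule.span 𝕜 (Set.range v)).topologicalClosure = ⊤)
    (h : ∀ i, Tendsto (fun a => L a (v i)) l (𝓝 (L' (v i)))) (x : E) :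
    Tendsto (fun a => L a x) l (𝓝 (L' x)) := by
  let S : Submodule 𝕜 E :=
    { carrier := {x | Tendsto (fun a => L a x) l (𝓝 (L' x))}
      add_mem' := fun hx hy => by simpa using hx.add hy
      zero_mem' := by simpa using tendsto_const_nhds
      smul_mem' := fun c x hx => by simpa using hx.const_smul c }
  have hS : IsClosed (S : Set E) :=
    (LipschitzWith.uniformEquicontinuous _ C hL).equicontinuous.isClosed_setOfPred_tendsto
      L'.continuous
  have hspan : Submodule.span 𝕜 (Set.range v) ≤ S :=
    Submodule.span_le.mpr (Set.range_subset_iff.mpr h)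
  exact (hv ▸ Submodule.topologicalClosure_minimal _ hspan hS) Submodule.mem_top

theorem Orthonormal.tendsto_inner_cofinite_zero {𝕜 E ι : Type*} [RCLike 𝕜]
    [NormedAddCommGroup E] [InnerProductSpace 𝕜 E] {v : ι → E} (hv : Orthonormal 𝕜 v) (x : E) :
    Tendsto (fun i => ⟪v i, x⟫_𝕜) cofinite (𝓝 0) := by
  rw [tendsto_zero_iff_norm_tendsto_zero]
  simpa [Real.sqrt_sq (norm_nonneg _)] using
    (hv.inner_products_summable (x := x)).tendsto_cofinite_zero.sqrt

def IsMixing {X : Type*} [MeasurableSpace X] (T : X → X) (μ : Measure X) : Prop :=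
  ∀ A B : Set X, MeasurableSet A → MeasurableSet B →
    Tendsto (fun n : ℕ => μ (A ∩ T^[n] ⁻¹' B)) atTop (𝓝 (μ A * μ B))

theorem isMixing_of_tendsto_inner {X : Type*} [MeasurableSpace X] {μ : Measure X}
    [IsProbabilityMeasure μ] {T : X → X} (hT : MeasurePreserving T μ μ)
    (h : ∀ f g : Lp ℂ 2 μ,
      Tendsto (fun n => ⟪f, Lp.compMeasurePreserving (T^[n]) (hT.iterate n) g⟫_ℂ) atTop
        (𝓝 (⟪f, Lp.const 2 μ (1 : ℂ)⟫_ℂ * ⟪Lp.const 2 μ (1 : ℂ), g⟫_ℂ))) :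
    IsMixing T μ := by
  intro A B hA hB
  have hAB := h (indicatorConstLp 2 hA (measure_ne_top μ A) 1)
    (indicatorConstLp 2 hB (measure_ne_top μ B) 1)
  simp only [Lp.indicatorConstLp_compMeasurePreserving, ← indicatorConstLp_univ,
    L2.inner_indicatorConstLp_one_indicatorConstLp_one, Set.inter_univ, Set.univ_inter] at hAB
  rw [← ENNReal.tendsto_toReal_iff (fun n => measure_ne_top μ _)
    (ENNReal.mul_ne_top (measure_ne_top μ A) (measure_ne_top μ B)), ENNReal.toReal_mul]
  simpa [Function.comp_def, measureReal_def] using (Complex.continuous_re.tendsto _).comp hAB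

namespace AddCircle

theorem fourier_zsmul {T : ℝ} (n k : ℤ) (x : AddCircle T) :
    fourier n (k • x) = fourier (n * k) x := by
  rw [fourier_apply, fourier_apply, smul_smul]

variable {T : ℝ} [Fact (0 < T)]

theorem haarAddCircle_singleton (x : AddCircle T) : haarAddCircle {x} = 0 := by
  have hvol : volume {x} = 0 := by
    simpa [Metric.closedBall_zero] using volume_closedBall T (x := x) 0
  rw [volume_eq_smul_haarAddCircle, Measure.smul_apply, smul_eq_mul, mul_eq_zero] at hvol
  exact hvol.resolve_left (by simpa using (Fact.out : 0 < T))

instance : NullSingletonClass (haarAddCircle : Measure (AddCircle T)) :=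
  ⟨haarAddCircle_singleton⟩

theorem fourierLp_zero :
    fourierLp 2 0 = Lp.const 2 (haarAddCircle : Measure (AddCircle T)) (1 : ℂ) := by
  refine Lp.ext ((coeFn_fourierLp 2 0).trans (.trans ?_ (Lp.coeFn_const 2 _ (1 : ℂ)).symm))
  exact .of_forall fun x => fourier_zero

theorem compMeasurePreserving_iterate_zsmul_fourierLp {k : ℤ}
    (hk : MeasurePreserving (fun x : AddCircle T => k • x) haarAddCircle haarAddCircle)
    (m : ℕ) (n : ℤ) :
    Lp.compMeasurePreserving (fun x : AddCircle T => k • x)^[m] (hk.iterate m) (fourierLp 2 n) =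
      fourierLp 2 (n * k ^ m) := by
  refine Lp.ext ((Lp.coeFn_compMeasurePreserving _ _).trans ?_)
  refine ((hk.iterate m).quasiMeasurePreserving.ae_eq_comp (coeFn_fourierLp 2 n)).trans ?_
  refine .trans (.of_forall fun x => ?_) (coeFn_fourierLp 2 _).symm
  simp only [Function.comp_apply, smul_iterate, fourier_zsmul]

theorem tendsto_inner_fourierLp_of_injective (f : Lp ℂ 2 (haarAddCircle : Measure (AddCircle T)))
    {κ : ℕ → ℤ} (hκ : Function.Injective κ) :
    Tendsto (fun n => ⟪f, fourierLp 2 (κ n)⟫_ℂ) atTop (𝓝 0) := by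
  have h := (Orthonormal.tendsto_inner_cofinite_zero orthonormal_fourier f).comp
    (Nat.cofinite_eq_atTop ▸ hκ.tendsto_cofinite)
  simpa [Function.comp_def] using (Complex.continuous_conj.tendsto 0).comp h

theorem isMixing_zsmul {k : ℤ} (hk : 1 < k.natAbs) :
    IsMixing (fun x : AddCircle T => k • x) haarAddCircle := by
  have hT := Measure.measurePreserving_zsmul (haarAddCircle : Measure (AddCircle T))
    (Int.natAbs_pos.mp (zero_lt_one.trans hk))
  refine isMixing_of_tendsto_inner hT fun f g => ?_
  let L : ℕ → Lp ℂ 2 haarAddCircle →ₗ[ℂ] ℂ := fun n =>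
    (innerₛₗ ℂ f).comp (Lp.compMeasurePreservingₗᵢ ℂ _ (hT.iterate n)).toLinearMap
  have hL (n : ℕ) : LipschitzWith (‖innerSL ℂ f‖₊ * 1) (L n) :=
    (innerSL ℂ f).lipschitz.comp (Lp.compMeasurePreservingₗᵢ ℂ _ (hT.iterate n)).lipschitz
  let one := Lp.const 2 (haarAddCircle : Measure (AddCircle T)) (1 : ℂ)
  refine tendsto_of_tendsto_on_denseSpan (L := L) (L' := ⟪f, one⟫_ℂ • innerSL ℂ one) hL
    (span_fourierLp_closure_eq_top (by norm_num)) (fun m => ?_) g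
  have hone : fourierLp (T := T) 2 0 = one := fourierLp_zero
  have hLm (n : ℕ) : L n (fourierLp 2 m) = ⟪f, fourierLp 2 (m * k ^ n)⟫_ℂ :=
    congrArg (⟪f, ·⟫_ℂ) (compMeasurePreserving_iterate_zsmul_fourierLp hT n m)
  have hL'm : (⟪f, one⟫_ℂ • innerSL ℂ one) (fourierLp 2 m) =
      ⟪f, one⟫_ℂ * ⟪one, fourierLp 2 m⟫_ℂ := rfl
  simp only [hLm]
  rw [hL'm, ← hone]
  rcases eq_or_ne m 0 with rfl | hm
  · simp [inner_self_eq_norm_sq_to_K, orthonormal_fourier.1]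
  · rw [orthonormal_fourier.2 hm.symm, mul_zero]
    exact tendsto_inner_fourierLp_of_injective f fun a b hab =>
      Int.pow_right_injective hk (mul_left_cancel₀ hm hab)

end AddCircle

def grandOrbitRel {X : Type*} (T : X → X) : Set (X × X) :=
  {p | ∃ a b : ℕ, T^[a] p.1 = T^[b] p.2}

section GrandOrbitRel

variable {X : Type*} {T : X → X}

theorem iterate_mem_grandOrbitRel (x : X) (i j : ℕ) : (T^[i] x, T^[j] x) ∈ grandOrbitRel T :=
  ⟨j, i, by rw [← Function.iterate_add_apply, ← Function.iterate_add_apply, add_comm]⟩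

theorem swap_mem_grandOrbitRel {u v : X} : (v, u) ∈ grandOrbitRel T ↔ (u, v) ∈ grandOrbitRel T :=
  ⟨fun ⟨a, b, h⟩ => ⟨b, a, h.symm⟩, fun ⟨a, b, h⟩ => ⟨b, a, h.symm⟩⟩

variable [MeasurableSpace X] [MeasurableEq X]

theorem measurableSet_setOf_iterate_eq (hT : Measurable T) (a b : ℕ) :
    MeasurableSet {p : X × X | T^[a] p.1 = T^[b] p.2} :=
  measurableSet_eq_fun ((hT.iterate a).comp measurable_fst) ((hT.iterate b).comp measurable_snd)

theorem measurableSet_grandOrbitRel (hT : Measurable T) : MeasurableSet (grandOrbitRel T) := by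
  simp only [grandOrbitRel, Set.ofPred_exists]
  exact .iUnion fun a => .iUnion fun b => measurableSet_setOf_iterate_eq hT a b

theorem measure_grandOrbitRel_eq_zero {μ : Measure X} [SFinite μ] [NullSingletonClass μ]
    (hT : MeasurePreserving T μ μ) : μ.prod μ (grandOrbitRel T) = 0 := by
  simp only [grandOrbitRel, Set.ofPred_exists]
  refine measure_iUnion_null fun a => measure_iUnion_null fun b => ?_
  rw [Measure.measure_prod_null (measurableSet_setOf_iterate_eq hT.measurable a b)]
  refine .of_forall fun u => ?_
  have hfiber : Prod.mk u ⁻¹' {p : X × X | T^[a] p.1 = T^[b] p.2} = T^[b] ⁻¹' {T^[a] u} := by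
    ext v; exact eq_comm
  show μ (Prod.mk u ⁻¹' _) = 0
  rw [hfiber, (hT.iterate b).measure_preimage (measurableSet_singleton _).nullMeasurableSet,
    measure_singleton]

end GrandOrbitRel

theorem tendsto_double_average_of_eq_one {a : ℕ → ℕ → ℝ}
    (ha : ∀ i j, 1 ≤ i → 1 ≤ j → a i j = 1) :
    Tendsto (fun n : ℕ => ((n : ℝ) ^ 2)⁻¹ * ∑ i ∈ Finset.Icc 1 n, ∑ j ∈ Finset.Icc 1 n, a i j)
      atTop (𝓝 1) := by
  refine tendsto_const_nhds.congr' ((eventually_ne_atTop 0).mono fun n hn => ?_)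
  have hsum : ∑ i ∈ Finset.Icc 1 n, ∑ j ∈ Finset.Icc 1 n, a i j = (n : ℝ) ^ 2 := by
    rw [Finset.sum_congr rfl fun i hi => Finset.sum_congr rfl fun j hj =>
      ha i j (Finset.mem_Icc.mp hi).1 (Finset.mem_Icc.mp hj).1]
    simp [sq]
  dsimp only
  rw [hsum, inv_mul_cancel₀ (by positivity)]

theorem stmt_5 :
    ∃ (X : Type) (_ : MetricSpace X) (_ : CompactSpace X) (_ : MeasurableSpace X)
      (_ : BorelSpace X) (μ : Measure X) (_ : IsProbabilityMeasure μ)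
      (T : X → X) (K : X × X → ℝ),
      MeasurePreserving T μ μ ∧
      -- T is (strongly) mixing
      (∀ A B : Set X, MeasurableSet A → MeasurableSet B →
        Tendsto (fun n : ℕ => μ (A ∩ T^[n] ⁻¹' B)) atTop (𝓝 (μ A * μ B))) ∧
      Measurable K ∧ (∀ p : X × X, |K p| ≤ 1) ∧
      (∀ u v : X, K (u, v) = K (v, u)) ∧
      K =ᵐ[μ.prod μ] 0 ∧
      (∀ (x : X) (i j : ℕ), 1 ≤ i → 1 ≤ j → K (T^[i] x, T^[j] x) = 1) ∧
      (∀ x : X, ¬ Tendsto (fun n : ℕ => ((n : ℝ) ^ 2)⁻¹ *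
          ∑ i ∈ Finset.Icc 1 n, ∑ j ∈ Finset.Icc 1 n, K (T^[i] x, T^[j] x))
        atTop (𝓝 (∫ p, K p ∂(μ.prod μ)))) ∧
      (∫ p, K p ∂(μ.prod μ)) = 0 := by
  let T : UnitAddCircle → UnitAddCircle := fun x => (2 : ℤ) • x
  have hT : MeasurePreserving T AddCircle.haarAddCircle AddCircle.haarAddCircle :=
    Measure.measurePreserving_zsmul _ two_ne_zero
  let K := (grandOrbitRel T).indicator (1 : UnitAddCircle × UnitAddCircle → ℝ)
  have hK_ae : K =ᵐ[AddCircle.haarAddCircle.prod AddCircle.haarAddCircle] 0 :=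
    Set.indicator_ae_eq_zero.mpr (measure_mono_null Set.inter_subset_left
      (measure_grandOrbitRel_eq_zero hT))
  have hK_orbit (x : UnitAddCircle) (i j : ℕ) : K (T^[i] x, T^[j] x) = 1 :=
    Set.indicator_of_mem (iterate_mem_grandOrbitRel x i j) _
  have hK_int : ∫ p, K p ∂(AddCircle.haarAddCircle.prod AddCircle.haarAddCircle) = 0 :=
    integral_eq_zero_of_ae hK_ae
  refine ⟨UnitAddCircle, inferInstance, inferInstance, inferInstance, inferInstance,
    AddCircle.haarAddCircle, inferInstance, T, K, hT, AddCircle.isMixing_zsmul (by norm_num),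
    measurable_const.indicator (measurableSet_grandOrbitRel hT.measurable),
    fun p => ?_, fun u v => ?_, hK_ae, fun x i j _ _ => hK_orbit x i j, fun x hx => ?_, hK_int⟩
  · by_cases hp : p ∈ grandOrbitRel T <;> simp [K, hp]
  · by_cases h : (u, v) ∈ grandOrbitRel T
    · simp [K, h, swap_mem_grandOrbitRel.mpr h]
    · simp [K, h, mt swap_mem_grandOrbitRel.mp h]
  · exact one_ne_zero (tendsto_nhds_unique
      (tendsto_double_average_of_eq_one fun i j _ _ => hK_orbit x i j) (hK_int ▸ hx))
end

section
/- Let P be a Markov kernel on a probability space (X, μ) satisfying the Doeblin condition: there exist n ≥ 1 and ε > 0 such that the n-step kernel satisfies P^n(x,y) ≥ ε for all x,y (with respect to μ). Suppose also that P defines a compact self-adjoint operator on L²(μ) with stationary measure μ. Then the eigenvalue 1 of P is simple (its eigenspace consists of the constant functions), and every other eigenvalue λ of P satisfies |λ| < 1. -/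
open MeasureTheory Filter Topology

open scoped ENNReal

/-! If `A f = λ f` and `∫ f = 0`, then `λⁿ f = Pⁿ f = (Pⁿ - ε) f`, because the constant part `ε`
of the kernel annihilates mean-zero functions. Since `P` is symmetric, `Pⁿ` is doubly stochastic,
so integrating `|λ|ⁿ |f| ≤ (Pⁿ - ε) |f|` over `x` gives `|λ|ⁿ ‖f‖₁ ≤ (1 - ε) ‖f‖₁`: either
`f = 0` or `|λ| < 1`. Self-adjointness makes eigenfunctions for `λ ≠ 1` orthogonal to the
constants, i.e. of mean zero; for `λ = 1` the same argument applies to `f - ∫ f`. -/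

section DoublyStochastic

variable {X : Type*} [MeasurableSpace X] {μ : Measure X}

noncomputable def kernelOp (μ : Measure X) (K : X × X → ℝ) (f : X → ℝ) (x : X) : ℝ :=
  ∫ y, K (x, y) * f y ∂μ

noncomputable def kernelComp (μ : Measure X) (P K : X × X → ℝ) (p : X × X) : ℝ :=
  ∫ z, P (p.1, z) * K (z, p.2) ∂μ

theorem kernelOp_congr_ae (K : X × X → ℝ) {f g : X → ℝ} (h : f =ᵐ[μ] g) :
    kernelOp μ K f = kernelOp μ K g :=
  funext fun _ => integral_congr_ae (h.mono fun y hy => by simp only [hy])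

theorem kernelOp_smul (K : X × X → ℝ) (c : ℝ) (f : X → ℝ) :
    kernelOp μ K (c • f) = c • kernelOp μ K f := by
  ext x
  simp only [kernelOp, Pi.smul_apply, smul_eq_mul, mul_left_comm _ c, integral_const_mul]

structure IsDoublyStochastic (μ : Measure X) (K : X × X → ℝ) : Prop where
  measurable : Measurable K
  nonneg : ∀ p, 0 ≤ K p
  lintegral_row : ∀ x, ∫⁻ y, ENNReal.ofReal (K (x, y)) ∂μ = 1
  lintegral_col : ∀ y, ∫⁻ x, ENNReal.ofReal (K (x, y)) ∂μ = 1

theorem IsDoublyStochastic.of_symm {P : X × X → ℝ} (hPmeas : Measurable P) (hPpos : ∀ p, 0 ≤ P p)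
    (hMarkov : ∀ x, ∫ y, P (x, y) ∂μ = 1) (hsymm : ∀ x y, P (x, y) = P (y, x)) :
    IsDoublyStochastic μ P := by
  have hrow : ∀ x, ∫⁻ y, ENNReal.ofReal (P (x, y)) ∂μ = 1 := fun x => by
    rw [← ofReal_integral_eq_lintegral_ofReal
      (Integrable.of_integral_ne_zero (by simp [hMarkov x])) (.of_forall fun _ => hPpos _),
      hMarkov x, ENNReal.ofReal_one]
  exact ⟨hPmeas, hPpos, hrow, fun y => by simpa only [hsymm _ y] using hrow y⟩

namespace IsDoublyStochastic

variable {P K : X × X → ℝ}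

theorem measurable_ofReal_mul (hK : IsDoublyStochastic μ K) {F : X → ℝ≥0∞} (hF : Measurable F) :
    Measurable fun p : X × X => ENNReal.ofReal (K p) * F p.2 :=
  hK.measurable.ennreal_ofReal.mul (hF.comp measurable_snd)

section SFinite

variable [SFinite μ]

theorem lintegral_lintegral_mul (hK : IsDoublyStochastic μ K) {F : X → ℝ≥0∞} (hF : Measurable F) :
    ∫⁻ x, ∫⁻ y, ENNReal.ofReal (K (x, y)) * F y ∂μ ∂μ = ∫⁻ y, F y ∂μ := by
  rw [lintegral_lintegral_swap (hK.measurable_ofReal_mul hF).aemeasurable]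
  refine lintegral_congr fun y => ?_
  have hKy : Measurable fun x => ENNReal.ofReal (K (x, y)) :=
    (hK.measurable.comp measurable_prodMk_right).ennreal_ofReal
  rw [lintegral_mul_const _ hKy, hK.lintegral_col y, one_mul]

theorem ae_lintegral_mul_lt_top (hK : IsDoublyStochastic μ K) {F : X → ℝ≥0∞} (hF : Measurable F)
    (hF_fin : ∫⁻ y, F y ∂μ ≠ ∞) : ∀ᵐ x ∂μ, ∫⁻ y, ENNReal.ofReal (K (x, y)) * F y ∂μ < ∞ :=
  ae_lt_top (hK.measurable_ofReal_mul hF).lintegral_prod_right'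
    (by rwa [hK.lintegral_lintegral_mul hF])

theorem ae_integrable_mul (hK : IsDoublyStochastic μ K) {f : X → ℝ} (hfm : Measurable f)
    (hfi : Integrable f μ) : ∀ᵐ x ∂μ, Integrable (fun y => K (x, y) * f y) μ := by
  filter_upwards [hK.ae_lintegral_mul_lt_top hfm.enorm hfi.2.ne] with x hx
  refine ⟨((hK.measurable.comp measurable_prodMk_left).mul hfm).aestronglyMeasurable, ?_⟩
  rw [hasFiniteIntegral_iff_enorm]
  simpa only [enorm_mul, Real.enorm_of_nonneg (hK.nonneg _)] using hx

theorem comp (hP : IsDoublyStochastic μ P) (hK : IsDoublyStochastic μ K) :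
    IsDoublyStochastic μ (kernelComp μ P K) := by
  set L : X → X → ℝ≥0∞ := fun x y => ∫⁻ z, ENNReal.ofReal (P (x, z)) * ENNReal.ofReal (K (z, y)) ∂μ
  have hPm := hP.measurable
  have hKm := hK.measurable
  have hLm : Measurable fun p : X × X => L p.1 p.2 :=
    Measurable.lintegral_prod_right' (f := fun q : (X × X) × X =>
      ENNReal.ofReal (P (q.1.1, q.2)) * ENNReal.ofReal (K (q.2, q.1.2))) (by fun_prop)
  have hrow : ∀ x, ∫⁻ y, L x y ∂μ = 1 := fun x => by
    rw [lintegral_lintegral_swap (by fun_prop)]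
    simp_rw [lintegral_const_mul' _ _ ENNReal.ofReal_ne_top, hK.lintegral_row, mul_one]
    exact hP.lintegral_row x
  have hcol : ∀ y, ∫⁻ x, L x y ∂μ = 1 := fun y =>
    (hP.lintegral_lintegral_mul (by fun_prop)).trans (hK.lintegral_col y)
  -- The real integral agrees with `L` wherever `L` is finite, hence almost everywhere in each
  -- variable by the row and column sums of `L`.
  have hL : ∀ x y, L x y ≠ ∞ → ENNReal.ofReal (kernelComp μ P K (x, y)) = L x y := by
    intro x y hxy
    have hnn : 0 ≤ᵐ[μ] fun z => P (x, z) * K (z, y) :=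
      .of_forall fun z => mul_nonneg (hP.nonneg _) (hK.nonneg _)
    have hint : Integrable (fun z => P (x, z) * K (z, y)) μ := by
      refine ⟨by fun_prop, (hasFiniteIntegral_iff_ofReal hnn).2 ?_⟩
      simpa only [ENNReal.ofReal_mul (hP.nonneg _)] using hxy.lt_top
    rw [kernelComp, ofReal_integral_eq_lintegral_ofReal hint hnn]
    simp only [ENNReal.ofReal_mul (hP.nonneg _), L]
  refine ⟨?_, fun p => integral_nonneg fun z => mul_nonneg (hP.nonneg _) (hK.nonneg _), ?_, ?_⟩
  · exact (StronglyMeasurable.integral_prod_right' (f := fun q : (X × X) × X =>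
      P (q.1.1, q.2) * K (q.2, q.1.2)) (by fun_prop)).measurable
  · intro x
    rw [← hrow x]
    refine lintegral_congr_ae ((ae_lt_top (hLm.comp measurable_prodMk_left) ?_).mono
      fun y hy => hL x y hy.ne)
    simp [hrow x]
  · intro y
    rw [← hcol y]
    refine lintegral_congr_ae ((ae_lt_top (hLm.comp measurable_prodMk_right) ?_).mono
      fun x hx => hL x y hx.ne)
    simp [hcol y]

theorem iterate (hP : IsDoublyStochastic μ P) {Pn : ℕ → X × X → ℝ} (hP1 : Pn 1 = P)
    (hrec : ∀ k, Pn (k + 1) = kernelComp μ P (Pn k)) {k : ℕ} (hk : 1 ≤ k) :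
    IsDoublyStochastic μ (Pn k) := by
  induction k, hk using Nat.le_induction with
  | base => rwa [hP1]
  | succ k _ ih => rw [hrec]; exact hP.comp ih

theorem ae_kernelOp_kernelOp (hP : IsDoublyStochastic μ P) (hK : IsDoublyStochastic μ K)
    {f : X → ℝ} (hfm : Measurable f) (hfi : Integrable f μ) :
    ∀ᵐ x ∂μ, kernelOp μ P (kernelOp μ K f) x = kernelOp μ (kernelComp μ P K) f x := by
  have hPm := hP.measurable
  have hKm := hK.measurable
  set c : X → ℝ≥0∞ := fun y => ∫⁻ z, ENNReal.ofReal (K (y, z)) * ‖f z‖ₑ ∂μ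
  have hcm : Measurable c := (hK.measurable_ofReal_mul hfm.enorm).lintegral_prod_right'
  have hc_fin : ∫⁻ y, c y ∂μ ≠ ∞ := by rw [hK.lintegral_lintegral_mul hfm.enorm]; exact hfi.2.ne
  filter_upwards [hP.ae_lintegral_mul_lt_top hcm hc_fin] with x hx
  have hint : Integrable (Function.uncurry fun y z => P (x, y) * (K (y, z) * f z)) (μ.prod μ) := by
    refine ⟨by fun_prop, ?_⟩
    rw [hasFiniteIntegral_iff_enorm, lintegral_prod _ (by fun_prop)]
    simpa only [Function.uncurry_apply_pair, enorm_mul, Real.enorm_of_nonneg (hP.nonneg _),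
      Real.enorm_of_nonneg (hK.nonneg _), mul_assoc,
      lintegral_const_mul' _ _ ENNReal.ofReal_ne_top] using hx
  calc kernelOp μ P (kernelOp μ K f) x = ∫ y, ∫ z, P (x, y) * (K (y, z) * f z) ∂μ ∂μ := by
        simp only [kernelOp, integral_const_mul]
    _ = ∫ z, ∫ y, P (x, y) * (K (y, z) * f z) ∂μ ∂μ := integral_integral_swap hint
    _ = kernelOp μ (kernelComp μ P K) f x := by
        simp only [kernelOp, kernelComp, ← integral_mul_const, mul_assoc]

theorem ae_pow_smul_eq_kernelOp (hP : IsDoublyStochastic μ P) {Pn : ℕ → X × X → ℝ}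
    (hP1 : Pn 1 = P) (hrec : ∀ k, Pn (k + 1) = kernelComp μ P (Pn k)) {f : X → ℝ}
    (hfm : Measurable f) (hfi : Integrable f μ) {c : ℝ} (hf : c • f =ᵐ[μ] kernelOp μ P f)
    {k : ℕ} (hk : 1 ≤ k) : c ^ k • f =ᵐ[μ] kernelOp μ (Pn k) f := by
  induction k, hk using Nat.le_induction with
  | base => rwa [hP1, pow_one]
  | succ k hk ih =>
    calc c ^ (k + 1) • f = c ^ k • c • f := by rw [pow_succ, mul_smul]
      _ =ᵐ[μ] c ^ k • kernelOp μ P f := hf.const_smul _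
      _ = kernelOp μ P (kernelOp μ (Pn k) f) := by
        rw [← kernelOp_smul, kernelOp_congr_ae P ih]
      _ =ᵐ[μ] kernelOp μ (Pn (k + 1)) f := by
        rw [hrec]; exact hP.ae_kernelOp_kernelOp (hP.iterate hP1 hrec hk) hfm hfi

end SFinite

section Probability

variable [IsProbabilityMeasure μ]

theorem ae_eq_zero_or_abs_lt_one (hK : IsDoublyStochastic μ K)
    {ε : ℝ} (hε : 0 < ε) (hKε : ∀ x y, ε ≤ K (x, y)) {f : X → ℝ} (hfm : Measurable f)
    (hfi : Integrable f μ) (hf0 : ∫ x, f x ∂μ = 0) {c : ℝ} (hf : c • f =ᵐ[μ] kernelOp μ K f) :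
    f =ᵐ[μ] 0 ∨ |c| < 1 := by
  set I := ∫⁻ x, ‖f x‖ₑ ∂μ
  by_cases hI : I = 0
  · exact .inl (((lintegral_eq_zero_iff hfm.enorm).1 hI).mono fun x hx => enorm_eq_zero.1 hx)
  refine .inr ?_
  have hsplit : ∀ᵐ x ∂μ, c * f x = ∫ y, (K (x, y) - ε) * f y ∂μ := by
    filter_upwards [hf, hK.ae_integrable_mul hfm hfi] with x hx hint
    simp_rw [sub_mul]
    rw [integral_sub hint (hfi.const_mul ε), integral_const_mul, hf0, mul_zero, sub_zero]
    exact hx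
  have hpt : ∀ᵐ x ∂μ, ‖c‖ₑ * ‖f x‖ₑ
      ≤ ∫⁻ y, (ENNReal.ofReal (K (x, y)) - ENNReal.ofReal ε) * ‖f y‖ₑ ∂μ := by
    filter_upwards [hsplit] with x hx
    calc ‖c‖ₑ * ‖f x‖ₑ = ‖∫ y, (K (x, y) - ε) * f y ∂μ‖ₑ := by rw [← enorm_mul, hx]
      _ ≤ ∫⁻ y, ‖(K (x, y) - ε) * f y‖ₑ ∂μ := enorm_integral_le_lintegral_enorm _
      _ = _ := by
        simp only [enorm_mul, Real.enorm_of_nonneg (sub_nonneg.2 (hKε x _)),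
          ENNReal.ofReal_sub _ hε.le]
  have hcol : ∀ y, ∫⁻ x, (ENNReal.ofReal (K (x, y)) - ENNReal.ofReal ε) ∂μ = 1 - ENNReal.ofReal ε :=
    fun y => by
      rw [lintegral_sub measurable_const (by simp) (.of_forall fun x => ENNReal.ofReal_le_ofReal
        (hKε x y)), hK.lintegral_col y, lintegral_const, measure_univ, mul_one]
  have hKm := hK.measurable
  have hI_le : ‖c‖ₑ * I ≤ (1 - ENNReal.ofReal ε) * I :=
    calc ‖c‖ₑ * I = ∫⁻ x, ‖c‖ₑ * ‖f x‖ₑ ∂μ := (lintegral_const_mul _ hfm.enorm).symm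
      _ ≤ ∫⁻ x, ∫⁻ y, (ENNReal.ofReal (K (x, y)) - ENNReal.ofReal ε) * ‖f y‖ₑ ∂μ ∂μ :=
        lintegral_mono_ae hpt
      _ = ∫⁻ y, ∫⁻ x, (ENNReal.ofReal (K (x, y)) - ENNReal.ofReal ε) * ‖f y‖ₑ ∂μ ∂μ :=
        lintegral_lintegral_swap (by fun_prop)
      _ = (1 - ENNReal.ofReal ε) * I := by
        rw [← lintegral_const_mul _ hfm.enorm]
        refine lintegral_congr fun y => ?_
        rw [lintegral_mul_const _ (by fun_prop), hcol]
  have hc : ‖c‖ₑ < 1 := ((ENNReal.mul_le_mul_iff_left hI hfi.2.ne).1 hI_le).trans_lt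
    (ENNReal.sub_lt_self ENNReal.one_ne_top one_ne_zero (by simpa using hε))
  rwa [Real.enorm_eq_ofReal_abs, ENNReal.ofReal_lt_one] at hc

theorem ae_eq_zero_or_abs_lt_one_of_doeblin (hP : IsDoublyStochastic μ P) {Pn : ℕ → X × X → ℝ} (hP1 : Pn 1 = P)
    (hrec : ∀ k, Pn (k + 1) = kernelComp μ P (Pn k)) {n : ℕ} (hn : 1 ≤ n) {ε : ℝ} (hε : 0 < ε)
    (hDoeblin : ∀ x y, ε ≤ Pn n (x, y)) {f : X → ℝ} (hfm : Measurable f) (hfi : Integrable f μ)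
    (hf0 : ∫ x, f x ∂μ = 0) {c : ℝ} (hf : c • f =ᵐ[μ] kernelOp μ P f) :
    f =ᵐ[μ] 0 ∨ |c| < 1 := by
  refine ((hP.iterate hP1 hrec hn).ae_eq_zero_or_abs_lt_one hε hDoeblin hfm hfi hf0
    (hP.ae_pow_smul_eq_kernelOp hP1 hrec hfm hfi hf hn)).imp_right fun h => ?_
  rwa [abs_pow, pow_lt_one_iff_of_nonneg (abs_nonneg c) (by omega)] at h

end Probability

end IsDoublyStochastic

end DoublyStochastic

section L2

variable {X : Type*} [MeasurableSpace X] {μ : Measure X}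

theorem inner_const_one_right [IsFiniteMeasure μ] (ψ : Lp ℝ 2 μ) :
    inner ℝ ψ (Lp.const 2 μ (1 : ℝ)) = ∫ x, ψ x ∂μ := by
  rw [L2.inner_def]
  refine integral_congr_ae ((Lp.coeFn_const 2 μ (1 : ℝ)).mono fun x hx => ?_)
  simp only [hx, Function.const_apply, RCLike.inner_apply, conj_trivial, one_mul]

theorem real_inner_const_one_self [IsProbabilityMeasure μ] :
    inner ℝ (Lp.const 2 μ (1 : ℝ)) (Lp.const 2 μ (1 : ℝ)) = 1 := by
  rw [inner_const_one_right, integral_congr_ae (Lp.coeFn_const 2 μ (1 : ℝ))]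
  simp

theorem coeFn_smul_const_one [IsFiniteMeasure μ] (m : ℝ) :
    ⇑(m • Lp.const 2 μ (1 : ℝ)) =ᵐ[μ] fun _ => m :=
  (Lp.coeFn_smul m _).trans ((Lp.coeFn_const 2 μ (1 : ℝ)).mono fun x hx => by
    rw [Pi.smul_apply, hx, Function.const_apply, smul_eq_mul, mul_one])

variable {P : X × X → ℝ} {A : Lp ℝ 2 μ →L[ℝ] Lp ℝ 2 μ}

theorem apply_const_one_of_kernelOp [IsFiniteMeasure μ]
    (hA : ∀ ψ : Lp ℝ 2 μ, (A ψ : X → ℝ) =ᵐ[μ] kernelOp μ P ψ)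
    (hMarkov : ∀ x, ∫ y, P (x, y) ∂μ = 1) : A (Lp.const 2 μ 1) = Lp.const 2 μ 1 := by
  have hone := Lp.coeFn_const 2 μ (1 : ℝ)
  refine Lp.ext ((hA _).trans (EventuallyEq.trans ?_ hone.symm))
  rw [kernelOp_congr_ae P hone]
  exact .of_forall fun x => by simpa [kernelOp] using hMarkov x

theorem smul_ae_eq_kernelOp_of_apply_eq_smul
    (hA : ∀ ψ : Lp ℝ 2 μ, (A ψ : X → ℝ) =ᵐ[μ] kernelOp μ P ψ) {ψ : Lp ℝ 2 μ} {c : ℝ}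
    (hψ : A ψ = c • ψ) : c • ⇑ψ =ᵐ[μ] kernelOp μ P ψ :=
  (Lp.coeFn_smul c ψ).symm.trans (hψ ▸ hA ψ)

end L2

theorem stmt_7_general {X : Type*} [MeasurableSpace X]
    (μ : Measure X) [IsProbabilityMeasure μ]
    (P : X × X → ℝ) (hPmeas : Measurable P) (hPpos : ∀ p, 0 ≤ P p)
    (hMarkov : ∀ x, ∫ y, P (x, y) ∂μ = 1)
    (hsymm : ∀ x y, P (x, y) = P (y, x))
    -- the n-step kernels
    (Pn : ℕ → X × X → ℝ)
    (hP1 : ∀ x y, Pn 1 (x, y) = P (x, y))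
    (hPrec : ∀ (k : ℕ) (x y : X), Pn (k + 1) (x, y) = ∫ z, P (x, z) * Pn k (z, y) ∂μ)
    -- Doeblin minorization
    (n : ℕ) (hn : 1 ≤ n) (ε : ℝ) (hε : 0 < ε)
    (hDoeblin : ∀ x y, ε ≤ Pn n (x, y))
    -- the associated operator on L²(μ)
    (A : Lp ℝ 2 μ →L[ℝ] Lp ℝ 2 μ)
    (hA : ∀ ψ : Lp ℝ 2 μ, (A ψ : X → ℝ) =ᵐ[μ] fun x => ∫ y, P (x, y) * ψ y ∂μ)
    (hAselfadj : ∀ f g : Lp ℝ 2 μ, inner ℝ (A f) g = (inner ℝ f (A g) : ℝ)) :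
    (∀ ψ : Lp ℝ 2 μ, A ψ = ψ → ∃ c : ℝ, (ψ : X → ℝ) =ᵐ[μ] fun _ => c) ∧
    (∀ lam : ℝ, lam ≠ 1 → (∃ ψ : Lp ℝ 2 μ, ψ ≠ 0 ∧ A ψ = lam • ψ) → |lam| < 1) := by
  have hP := IsDoublyStochastic.of_symm hPmeas hPpos hMarkov hsymm
  have hP1' : Pn 1 = P := funext fun p => hP1 p.1 p.2
  have hrec : ∀ k, Pn (k + 1) = kernelComp μ P (Pn k) := fun k => funext fun p => hPrec k p.1 p.2
  set one := Lp.const 2 μ (1 : ℝ)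
  have hAone : A one = one := apply_const_one_of_kernelOp hA hMarkov
  have key : ∀ (ψ : Lp ℝ 2 μ) (c : ℝ), A ψ = c • ψ → inner ℝ ψ one = 0 → ψ = 0 ∨ |c| < 1 := by
    intro ψ c hψ hψ0
    rw [inner_const_one_right] at hψ0
    refine (hP.ae_eq_zero_or_abs_lt_one_of_doeblin hP1' hrec hn hε hDoeblin
      (Lp.stronglyMeasurable ψ).measurable ((Lp.memLp ψ).integrable one_le_two) hψ0
      (smul_ae_eq_kernelOp_of_apply_eq_smul hA hψ)).imp_left fun h => ?_
    exact Lp.ext (h.trans (Lp.coeFn_zero ℝ 2 μ).symm)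
  refine ⟨fun ψ hψ => ?_, fun c hc ⟨ψ, hψ0, hψ⟩ => ?_⟩
  · set m := inner ℝ ψ one
    have hφ : A (ψ - m • one) = (1 : ℝ) • (ψ - m • one) := by
      rw [one_smul, map_sub, map_smul, hAone, hψ]
    have hφ0 : inner ℝ (ψ - m • one) one = 0 := by
      rw [inner_sub_left, real_inner_smul_left, real_inner_const_one_self, mul_one, sub_self]
    obtain h | h := key _ 1 hφ hφ0
    · exact ⟨m, sub_eq_zero.1 h ▸ coeFn_smul_const_one m⟩
    · norm_num at h
  · have h : (c - 1) * inner ℝ ψ one = 0 := by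
      rw [sub_mul, one_mul, ← real_inner_smul_left, ← hψ, hAselfadj, hAone, sub_self]
    exact (key ψ c hψ ((mul_eq_zero.1 h).resolve_left (sub_ne_zero.2 hc))).resolve_left hψ0

/-- Doeblin condition for a symmetric compact Markov operator implies the eigenvalue 1
is simple (eigenspace = constants) and all other eigenvalues have modulus < 1. -/
theorem stmt_7 {X : Type*} [MeasurableSpace X]
    (μ : Measure X) [IsProbabilityMeasure μ]
    (P : X × X → ℝ) (hPmeas : Measurable P) (hPpos : ∀ p, 0 ≤ P p)
    (hMarkov : ∀ x, ∫ y, P (x, y) ∂μ = 1)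
    (hsymm : ∀ x y, P (x, y) = P (y, x))
    -- the n-step kernels
    (Pn : ℕ → X × X → ℝ)
    (hP1 : ∀ x y, Pn 1 (x, y) = P (x, y))
    (hPrec : ∀ (k : ℕ) (x y : X), Pn (k + 1) (x, y) = ∫ z, P (x, z) * Pn k (z, y) ∂μ)
    -- Doeblin minorization
    (n : ℕ) (hn : 1 ≤ n) (ε : ℝ) (hε : 0 < ε)
    (hDoeblin : ∀ x y, ε ≤ Pn n (x, y))
    -- the associated operator on L²(μ)
    (A : Lp ℝ 2 μ →L[ℝ] Lp ℝ 2 μ)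
    (hA : ∀ ψ : Lp ℝ 2 μ, (A ψ : X → ℝ) =ᵐ[μ] fun x => ∫ y, P (x, y) * ψ y ∂μ)
    (hAcompact : IsCompactOperator A)
    (hAselfadj : ∀ f g : Lp ℝ 2 μ, inner ℝ (A f) g = (inner ℝ f (A g) : ℝ)) :
    (∀ ψ : Lp ℝ 2 μ, A ψ = ψ → ∃ c : ℝ, (ψ : X → ℝ) =ᵐ[μ] fun _ => c) ∧
    (∀ lam : ℝ, lam ≠ 1 → (∃ ψ : Lp ℝ 2 μ, ψ ≠ 0 ∧ A ψ = lam • ψ) → |lam| < 1) :=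
  stmt_7_general μ P hPmeas hPpos hMarkov hsymm Pn hP1 hPrec n hn ε hε hDoeblin A hA hAselfadj
end

section
/- For constants C < ∞ and A > 0, the integral ∬∬_{0<s_1<s_2<s_3<s_4<T} min(e^{−A(s_2−s_1)}, e^{−A(s_4−s_3)}) ds_1 ds_2 ds_3 ds_4 is at most C_A T² for all T ≥ 1, where C_A depends only on A. -/
/-!
Bounding the minimum by the geometric mean `e^{-A(s₂-s₁)/2} e^{-A(s₄-s₃)/2}` decouples the two
gaps: the integrals over `s₁` and over `s₃` are each at most `2/A` whatever the outer variables,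
and only the integrals over `s₂` and `s₄`, on intervals of length at most `T`, cost a factor `T`.
-/

theorem integral_exp_neg_mul_sub (c : ℝ) (hc : c ≠ 0) (a b : ℝ) :
    ∫ x in a..b, Real.exp (-c * (b - x)) = (1 - Real.exp (-c * (b - a))) / c := by
  have hderiv (x : ℝ) :
      HasDerivAt (fun x => Real.exp (-c * (b - x)) / c) (Real.exp (-c * (b - x))) x :=
    ((((hasDerivAt_id x).const_sub b).const_mul (-c)).exp.div_const c).congr_deriv
      (by field_simp; rfl)
  rw [intervalIntegral.integral_eq_sub_of_hasDerivAt (fun x _ => hderiv x)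
    ((by fun_prop : Continuous fun x => Real.exp (-c * (b - x))).intervalIntegrable _ _)]
  simp only [sub_self, mul_zero, Real.exp_zero]
  ring

theorem integral_exp_neg_mul_sub_le {c : ℝ} (hc : 0 < c) (a b : ℝ) :
    ∫ x in a..b, Real.exp (-c * (b - x)) ≤ 1 / c := by
  rw [integral_exp_neg_mul_sub c hc.ne']
  gcongr
  linarith [Real.exp_pos (-c * (b - a))]

theorem min_exp_neg_mul_le {A : ℝ} (hA : 0 ≤ A) (x y : ℝ) :
    min (Real.exp (-A * x)) (Real.exp (-A * y)) ≤
      Real.exp (-(A / 2) * x) * Real.exp (-(A / 2) * y) := by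
  rw [← Real.exp_add]
  rcases le_total x y with h | h
  · exact min_le_of_right_le (Real.exp_le_exp.2 (by nlinarith))
  · exact min_le_of_left_le (Real.exp_le_exp.2 (by nlinarith))

-- Bounds on norms chain through `intervalIntegral.norm_integral_le_of_norm_le`, which needs no
-- integrability of the inner parametric integrals.
section SimplexIntegral

variable {A : ℝ}

theorem norm_integral_min_exp_le (hA : 0 < A) (s₄ s₃ s₂ : ℝ) (hs₂ : 0 ≤ s₂) :
    ‖∫ s₁ in (0:ℝ)..s₂, min (Real.exp (-A * (s₂ - s₁))) (Real.exp (-A * (s₄ - s₃)))‖ ≤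
      2 / A * Real.exp (-(A / 2) * (s₄ - s₃)) := by
  calc _ ≤ ∫ s₁ in (0:ℝ)..s₂, Real.exp (-(A / 2) * (s₂ - s₁)) * Real.exp (-(A / 2) * (s₄ - s₃)) :=
        intervalIntegral.norm_integral_le_of_norm_le hs₂
          (MeasureTheory.ae_of_all _ fun s₁ _ => by
            rw [Real.norm_eq_abs, abs_of_pos (lt_min (Real.exp_pos _) (Real.exp_pos _))]
            exact min_exp_neg_mul_le hA.le _ _)
          ((by fun_prop : Continuous _).intervalIntegrable _ _)
    _ ≤ 1 / (A / 2) * Real.exp (-(A / 2) * (s₄ - s₃)) := by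
        rw [intervalIntegral.integral_mul_const]
        gcongr
        exact integral_exp_neg_mul_sub_le (by positivity) _ _
    _ = 2 / A * Real.exp (-(A / 2) * (s₄ - s₃)) := by rw [one_div_div]

theorem norm_integral_integral_min_exp_le (hA : 0 < A) (s₄ s₃ : ℝ) (hs₃ : 0 ≤ s₃) :
    ‖∫ s₂ in (0:ℝ)..s₃, ∫ s₁ in (0:ℝ)..s₂,
        min (Real.exp (-A * (s₂ - s₁))) (Real.exp (-A * (s₄ - s₃)))‖ ≤
      s₃ * (2 / A) * Real.exp (-(A / 2) * (s₄ - s₃)) := by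
  have := intervalIntegral.norm_integral_le_of_norm_le_const fun s₂ hs₂ =>
    norm_integral_min_exp_le hA s₄ s₃ s₂ (Set.uIoc_of_le hs₃ ▸ hs₂).1.le
  rw [sub_zero, abs_of_nonneg hs₃] at this
  exact this.trans_eq (by ring)

theorem norm_integral_integral_integral_min_exp_le (hA : 0 < A) (s₄ : ℝ) (hs₄ : 0 ≤ s₄) :
    ‖∫ s₃ in (0:ℝ)..s₄, ∫ s₂ in (0:ℝ)..s₃, ∫ s₁ in (0:ℝ)..s₂,
        min (Real.exp (-A * (s₂ - s₁))) (Real.exp (-A * (s₄ - s₃)))‖ ≤ 4 / A ^ 2 * s₄ := by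
  calc _ ≤ ∫ s₃ in (0:ℝ)..s₄, s₄ * (2 / A) * Real.exp (-(A / 2) * (s₄ - s₃)) :=
        intervalIntegral.norm_integral_le_of_norm_le hs₄
          (MeasureTheory.ae_of_all _ fun s₃ hs₃ => by
            refine (norm_integral_integral_min_exp_le hA s₄ s₃ hs₃.1.le).trans ?_
            gcongr
            exact hs₃.2)
          ((by fun_prop : Continuous _).intervalIntegrable _ _)
    _ ≤ s₄ * (2 / A) * (1 / (A / 2)) := by
        rw [intervalIntegral.integral_const_mul]
        gcongr
        exact integral_exp_neg_mul_sub_le (by positivity) _ _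
    _ = 4 / A ^ 2 * s₄ := by field_simp; ring

theorem norm_simplex_integral_min_exp_le (hA : 0 < A) (T : ℝ) (hT : 0 ≤ T) :
    ‖∫ s₄ in (0:ℝ)..T, ∫ s₃ in (0:ℝ)..s₄, ∫ s₂ in (0:ℝ)..s₃, ∫ s₁ in (0:ℝ)..s₂,
        min (Real.exp (-A * (s₂ - s₁))) (Real.exp (-A * (s₄ - s₃)))‖ ≤ 2 / A ^ 2 * T ^ 2 := by
  calc _ ≤ ∫ s₄ in (0:ℝ)..T, 4 / A ^ 2 * s₄ :=
        intervalIntegral.norm_integral_le_of_norm_le hT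
          (MeasureTheory.ae_of_all _ fun s₄ hs₄ =>
            norm_integral_integral_integral_min_exp_le hA s₄ hs₄.1.le)
          ((by fun_prop : Continuous _).intervalIntegrable _ _)
    _ = 2 / A ^ 2 * T ^ 2 := by
        rw [intervalIntegral.integral_const_mul, integral_id]
        ring

end SimplexIntegral

/-- The integral of `min(e^{-A(s₂-s₁)}, e^{-A(s₄-s₃)})` over the 4-simplex
`{0 < s₁ < s₂ < s₃ < s₄ < T}` is at most `C_A · T²` for all `T ≥ 1`. -/
theorem stmt_12 (A : ℝ) (hA : 0 < A) :
    ∃ C_A : ℝ, 0 < C_A ∧ ∀ T : ℝ, 1 ≤ T →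
      (∫ s₄ in (0:ℝ)..T, ∫ s₃ in (0:ℝ)..s₄, ∫ s₂ in (0:ℝ)..s₃, ∫ s₁ in (0:ℝ)..s₂,
        min (Real.exp (-A * (s₂ - s₁))) (Real.exp (-A * (s₄ - s₃)))) ≤ C_A * T ^ 2 :=
  ⟨2 / A ^ 2, by positivity, fun T hT =>
    (Real.le_norm_self _).trans (norm_simplex_integral_min_exp_le hA T (by linarith))⟩
end

section
/- Let (X, ν) be a probability space with a measure-preserving flow (T_s) on X, and suppose nonnegative measurable kernels (H_δ)_{δ>0}, H_δ : X × X → ℝ_{≥0}, satisfy H_δ(u,v) = ∑_{i=0}^{m-1} ∑_{j=0}^{m-1} H_{δ/m}(T_{iδ/m} u, T_{jδ/m} v) for all m ≥ 2, and that the slice integrals h_δ(u) := ∫ H_δ(u,v) dν(v) satisfy h_δ(u) = δ²κ(1+o(1)) uniformly in u as δ → 0. Then h_δ(u) = δ²κ exactly, for every u and every sufficiently small δ. -/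
open MeasureTheory Filter Topology

/-- If the kernels `H_δ` satisfy the self-similar decomposition under a measure-preserving
flow and their slice integrals are uniformly asymptotic to `δ²κ`, then the slice integrals
equal `δ²κ` exactly for all sufficiently small `δ`. -/
theorem stmt_18 {X : Type*} [MeasurableSpace X] (ν : Measure X) [IsProbabilityMeasure ν]
    (T : ℝ → X → X) (hT : ∀ s, MeasurePreserving (T s) ν ν)
    (H : ℝ → X × X → ℝ) (hpos : ∀ δ u v, 0 ≤ H δ (u, v))
    (hint : ∀ δ u, Integrable (fun v => H δ (u, v)) ν)
    (hdec : ∀ δ > (0 : ℝ), ∀ m : ℕ, 2 ≤ m → ∀ u v : X,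
      H δ (u, v) = ∑ i ∈ Finset.range m, ∑ j ∈ Finset.range m,
        H (δ / m) (T (i * δ / m) u, T (j * δ / m) v))
    (κ : ℝ)
    (hasymp : ∀ ε > (0 : ℝ), ∃ δ₁ > (0 : ℝ), ∀ δ : ℝ, 0 < δ → δ < δ₁ →
      ∀ u : X, |(∫ v, H δ (u, v) ∂ν) / δ ^ 2 - κ| ≤ ε) :
    ∃ δ₀ > (0 : ℝ), ∀ δ : ℝ, 0 < δ → δ ≤ δ₀ →
      ∀ u : X, ∫ v, H δ (u, v) ∂ν = δ ^ 2 * κ := by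
  -- change of variables under the flow
  have hint' : ∀ (δ' : ℝ) (x : X) (s : ℝ),
      Integrable (fun v => H δ' (x, T s v)) ν := by
    intro δ' x s
    have h0 := hint δ' x
    have hmeas : AEStronglyMeasurable (fun v => H δ' (x, v)) (ν.map (T s)) := by
      rw [(hT s).map_eq]; exact h0.aestronglyMeasurable
    have h1 : Integrable (fun v => H δ' (x, v)) (ν.map (T s)) := by
      rw [(hT s).map_eq]; exact h0
    exact (integrable_map_measure hmeas (hT s).measurable.aemeasurable).mp h1
  have key : ∀ (δ' : ℝ) (x : X) (s : ℝ),
      ∫ v, H δ' (x, T s v) ∂ν = ∫ v, H δ' (x, v) ∂ν := by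
    intro δ' x s
    have hmeas : AEStronglyMeasurable (fun v => H δ' (x, v)) (ν.map (T s)) := by
      rw [(hT s).map_eq]; exact (hint δ' x).aestronglyMeasurable
    rw [← integral_map (hT s).measurable.aemeasurable hmeas, (hT s).map_eq]
  refine ⟨1, one_pos, fun δ hδ _ u => ?_⟩
  have hδ2 : (0:ℝ) < δ ^ 2 := by positivity
  have main : ∀ ε > (0:ℝ), |(∫ v, H δ (u, v) ∂ν) - δ ^ 2 * κ| ≤ ε * δ ^ 2 := by
    intro ε hε
    obtain ⟨δ₁, hδ₁, hub⟩ := hasymp ε hε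
    obtain ⟨m, hm⟩ := exists_nat_gt (max 2 (δ / δ₁))
    have hm2 : 2 ≤ m := by
      have := lt_of_le_of_lt (le_max_left 2 (δ / δ₁)) hm
      exact_mod_cast this.le
    have hmR : (0:ℝ) < m := by positivity
    have hdm : 0 < δ / m := by positivity
    have hdm1 : δ / m < δ₁ := by
      rw [div_lt_iff₀ hmR, mul_comm]
      exact (div_lt_iff₀ hδ₁).mp (lt_of_le_of_lt (le_max_right 2 (δ / δ₁)) hm)
    have hslice : ∀ x : X,
        |(∫ v, H (δ / m) (x, v) ∂ν) - (δ / m) ^ 2 * κ| ≤ ε * (δ / m) ^ 2 := by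
      intro x
      have h1 := hub (δ / m) hdm hdm1 x
      have hd2 : (0:ℝ) < (δ / m) ^ 2 := by positivity
      have h2 : (∫ v, H (δ / m) (x, v) ∂ν) - (δ / m) ^ 2 * κ
          = ((∫ v, H (δ / m) (x, v) ∂ν) / (δ / m) ^ 2 - κ) * (δ / m) ^ 2 := by
        field_simp
      rw [h2, abs_mul, abs_of_pos hd2]
      exact mul_le_mul_of_nonneg_right h1 hd2.le
    have heq : ∫ v, H δ (u, v) ∂ν
        = ∑ i ∈ Finset.range m, ∑ j ∈ Finset.range m,
            ∫ v, H (δ / m) (T (i * δ / m) u, v) ∂ν := by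
      calc ∫ v, H δ (u, v) ∂ν
          = ∫ v, ∑ i ∈ Finset.range m, ∑ j ∈ Finset.range m,
              H (δ / m) (T (i * δ / m) u, T (j * δ / m) v) ∂ν := by
            simp only [hdec δ hδ m hm2 u]
        _ = ∑ i ∈ Finset.range m, ∑ j ∈ Finset.range m,
              ∫ v, H (δ / m) (T (i * δ / m) u, T (j * δ / m) v) ∂ν := by
            rw [integral_finset_sum _ (fun i _ => integrable_finset_sum _
              (fun j _ => hint' _ _ _))]
            exact Finset.sum_congr rfl fun i _ =>
              integral_finset_sum _ (fun j _ => hint' _ _ _)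
        _ = ∑ i ∈ Finset.range m, ∑ j ∈ Finset.range m,
              ∫ v, H (δ / m) (T (i * δ / m) u, v) ∂ν := by
            exact Finset.sum_congr rfl fun i _ => Finset.sum_congr rfl fun j _ =>
              key _ _ _
    have hconst : δ ^ 2 * κ
        = ∑ i ∈ Finset.range m, ∑ j ∈ Finset.range m, (δ / m) ^ 2 * κ := by
      simp only [Finset.sum_const, Finset.card_range, nsmul_eq_mul]
      field_simp
    rw [heq, hconst]
    have hdiff : (∑ i ∈ Finset.range m, ∑ j ∈ Finset.range m,
          ∫ v, H (δ / m) (T (i * δ / m) u, v) ∂ν)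
        - (∑ i ∈ Finset.range m, ∑ j ∈ Finset.range m, (δ / m) ^ 2 * κ)
        = ∑ i ∈ Finset.range m, ∑ j ∈ Finset.range m,
          ((∫ v, H (δ / m) (T (i * δ / m) u, v) ∂ν) - (δ / m) ^ 2 * κ) := by
      rw [← Finset.sum_sub_distrib]
      exact Finset.sum_congr rfl fun i _ => (Finset.sum_sub_distrib _ _).symm
    rw [hdiff]
    have hbd : |∑ i ∈ Finset.range m, ∑ j ∈ Finset.range m,
        ((∫ v, H (δ / m) (T (i * δ / m) u, v) ∂ν) - (δ / m) ^ 2 * κ)|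
        ≤ ∑ i ∈ Finset.range m, ∑ j ∈ Finset.range m, ε * (δ / m) ^ 2 := by
      refine (Finset.abs_sum_le_sum_abs _ _).trans (Finset.sum_le_sum fun i _ => ?_)
      exact (Finset.abs_sum_le_sum_abs _ _).trans (Finset.sum_le_sum fun j _ => hslice _)
    refine hbd.trans ?_
    simp only [Finset.sum_const, Finset.card_range, nsmul_eq_mul]
    have : (m:ℝ) * ((m:ℝ) * (ε * (δ / m) ^ 2)) = ε * δ ^ 2 := by
      field_simp
    · rw [this]
  -- conclude exact equality
  by_contra hne
  set x := (∫ v, H δ (u, v) ∂ν) - δ ^ 2 * κ with hx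
  have hxne : x ≠ 0 := sub_ne_zero_of_ne hne
  have hxpos : 0 < |x| := abs_pos.mpr hxne
  have hεp : 0 < |x| / (2 * δ ^ 2) := by positivity
  have h1 := main _ hεp
  have h2 : |x| / (2 * δ ^ 2) * δ ^ 2 = |x| / 2 := by
    field_simp
  rw [h2] at h1
  linarith
end
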